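/- arXiv:2605.01565 — 2 statements merged into one kernel-verified Lean document; each statement's English description precedes it below -/
import Mathlib

section
/- Every vertex x of G₂ with Z(x) = {1,…,m−1} has open neighborhood exactly X_{{m}}, the class of vertices whose zero-set is {m}; in particular, all minimum-degree vertices of G₂ share the same open neighborhood. -/
/-!
By the Chinese remainder theorem `ℤ/nℤ ≃ ∏ ℤ/p_iℤ`, and each factor is a field. Hence `x` is a unit
iff `Z(x) = ∅`, and `(x, y) = (1)` iff `Z(x)` and `Z(y)` are disjoint. The neighbours of a vertex
with `Z(x) = {1,…,m-1}` are therefore the nonunits `y` with `Z(y) ⊆ {m}`, i.e. `Z(y) = {m}`.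
-/

open Finset

abbrev NN (m : ℕ) (p : Fin m → ℕ) : ℕ := ∏ i, p i

abbrev Vtx (m : ℕ) (p : Fin m → ℕ) : Type :=
  {x : ZMod (NN m p) // x ≠ 0 ∧ ¬ IsUnit x}

/-- The induced subgraph `G₂` of the comaximal graph of `ℤ/nℤ` on nonzero nonunits. -/
def G2 (m : ℕ) (p : Fin m → ℕ) : SimpleGraph (Vtx m p) where
  Adj x y := x ≠ y ∧ Ideal.span ({x.1, y.1} : Set (ZMod (NN m p))) = ⊤
  symm := by
    constructor
    rintro x y ⟨hxy, h⟩
    exact ⟨hxy.symm, by rwa [Set.pair_comm]⟩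
  loopless := by constructor; rintro x ⟨h, -⟩; exact h rfl

/-- The zero-set of `x`: indices `i` where the image of `x` in `ℤ/p_iℤ` is zero. -/
def Z (m : ℕ) (p : Fin m → ℕ) (x : ZMod (NN m p)) : Finset (Fin m) :=
  Finset.univ.filter fun i =>
    (ZMod.castHom (Finset.dvd_prod_of_mem p (Finset.mem_univ i)) (ZMod (p i))) x = 0

/-- The class `X_S` of vertices of `G₂` with zero-set `S`. -/
def XS (m : ℕ) (p : Fin m → ℕ) (S : Finset (Fin m)) : Set (Vtx m p) :=
  {x | Z m p x.1 = S}

theorem Pi.isCoprime_iff {ι : Type*} {R : ι → Type*} [∀ i, CommSemiring (R i)]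
    {a b : ∀ i, R i} : IsCoprime a b ↔ ∀ i, IsCoprime (a i) (b i) := by
  refine ⟨fun h i => h.map (Pi.evalRingHom R i), fun h => ?_⟩
  choose u v huv using h
  exact ⟨u, v, funext huv⟩

theorem RingEquiv.isCoprime_map_iff {R S : Type*} [CommSemiring R] [CommSemiring S]
    (e : R ≃+* S) {a b : R} : IsCoprime (e a) (e b) ↔ IsCoprime a b :=
  ⟨fun h => by simpa using h.map e.symm.toRingHom, fun h => h.map e.toRingHom⟩

section ZeroSet

variable {m : ℕ} {p : Fin m → ℕ}

theorem Nat.pairwise_coprime_of_prime_of_injective (hp : ∀ i, (p i).Prime)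
    (hinj : Function.Injective p) : Pairwise fun i j => (p i).Coprime (p j) :=
  fun i j hij => (Nat.coprime_primes (hp i) (hp j)).mpr (hinj.ne hij)

theorem mem_Z_iff_prodEquivPi_eq_zero (hcop : Pairwise fun i j => (p i).Coprime (p j))
    (x : ZMod (NN m p)) (i : Fin m) : i ∈ Z m p x ↔ ZMod.prodEquivPi p hcop x i = 0 := by
  rw [ZMod.prodEquivPi_apply]
  exact Finset.mem_filter.trans (and_iff_right (Finset.mem_univ i))

theorem isUnit_iff_Z_eq_empty (hp : ∀ i, (p i).Prime) (hinj : Function.Injective p)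
    (x : ZMod (NN m p)) : IsUnit x ↔ Z m p x = ∅ := by
  have := fun i => Fact.mk (hp i)
  have hcop := Nat.pairwise_coprime_of_prime_of_injective hp hinj
  rw [← isUnit_map_iff (ZMod.prodEquivPi p hcop) x, Pi.isUnit_iff,
    Finset.eq_empty_iff_forall_notMem]
  simp only [isUnit_iff_ne_zero, mem_Z_iff_prodEquivPi_eq_zero hcop]

theorem span_pair_eq_top_iff_disjoint_Z (hp : ∀ i, (p i).Prime) (hinj : Function.Injective p)
    (a b : ZMod (NN m p)) :
    Ideal.span {a, b} = ⊤ ↔ Disjoint (Z m p a) (Z m p b) := by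
  have := fun i => Fact.mk (hp i)
  have hcop := Nat.pairwise_coprime_of_prime_of_injective hp hinj
  rw [Set.insert_eq, Ideal.span_union, Ideal.sup_eq_top_iff_isCoprime,
    ← (ZMod.prodEquivPi p hcop).isCoprime_map_iff, Pi.isCoprime_iff, Finset.disjoint_left]
  simp only [Semifield.isCoprime_iff, mem_Z_iff_prodEquivPi_eq_zero hcop, ← not_and_or, not_and]

theorem G2_adj_iff (hp : ∀ i, (p i).Prime) (hinj : Function.Injective p) (x y : Vtx m p) :
    (G2 m p).Adj x y ↔ Disjoint (Z m p x.1) (Z m p y.1) := by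
  change x ≠ y ∧ _ ↔ _
  rw [span_pair_eq_top_iff_disjoint_Z hp hinj]
  refine ⟨And.right, fun h => ⟨?_, h⟩⟩
  rintro rfl
  rw [disjoint_self, Finset.bot_eq_empty, ← isUnit_iff_Z_eq_empty hp hinj] at h
  exact x.2.2 h

end ZeroSet

theorem stmt8 (m : ℕ) (hm : 2 ≤ m) (p : Fin m → ℕ) (hp : ∀ i, (p i).Prime)
    (hmono : StrictMono p) (x : Vtx m p)
    (hx : Z m p x.1 = Finset.univ.erase (⟨m - 1, by omega⟩ : Fin m)) :
    (G2 m p).neighborSet x = XS m p {(⟨m - 1, by omega⟩ : Fin m)} := by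
  ext y
  have hy : Z m p y.1 ≠ ∅ := fun h => y.2.2 ((isUnit_iff_Z_eq_empty hp hmono.injective y.1).2 h)
  rw [SimpleGraph.mem_neighborSet, G2_adj_iff hp hmono.injective, hx, ← Finset.compl_singleton,
    disjoint_compl_left_iff, Finset.subset_singleton_iff, or_iff_right hy]
  rfl
end

section
/- Assume m ≥ 3. The class X_{{m}} is a vertex cut of G₂; that is, deleting all vertices of X_{{m}} from G₂ yields a disconnected graph. Consequently κ(G₂) ≤ |X_{{m}}| = ∏_{i=1}^{m−1} (p_i − 1). -/
open Finset

/-- Vertex connectivity: the minimum size of a set of vertices whose deletion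
leaves a disconnected graph. -/
noncomputable def kappa {V : Type*} (G : SimpleGraph V) : ℕ :=
  sInf {k | ∃ W : Set V, W.ncard = k ∧ ¬ (G.induce Wᶜ).Connected}

/-!
By the Chinese remainder theorem `ℤ/nℤ ≃ ∏ ℤ/p_iℤ`, and `Z x` is the set of vanishing
coordinates. So `x` is a vertex iff `Z x` is neither empty (units) nor everything (zero), and
comaximal elements have disjoint zero-sets. A vertex with `Z x = {i}ᶜ` can therefore only be
adjacent to vertices with zero-set `{i}`: deleting `X_{i}` isolates it, while for `m ≥ 3` a vertex
with zero-set `{j}`, `j ≠ i`, survives. Counting coordinates, `|X_S| = ∏_{i ∉ S} (p_i - 1)`.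
-/

lemma SimpleGraph.not_connected_induce_of_forall_adj_notMem {V : Type*} {G : SimpleGraph V}
    {s : Set V} {x y : V} (hx : x ∈ s) (hy : y ∈ s) (hxy : x ≠ y)
    (hnbr : ∀ z, G.Adj x z → z ∉ s) : ¬ (G.induce s).Connected := by
  intro hconn
  have : Nontrivial s := nontrivial_of_ne ⟨x, hx⟩ ⟨y, hy⟩ (by simpa using hxy)
  obtain ⟨⟨z, hz⟩, hadj⟩ := hconn.preconnected.exists_adj_of_nontrivial ⟨x, hx⟩
  exact hnbr z hadj hz

lemma ZMod.card_subtype_eq_zero_iff (q : ℕ) [NeZero q] (P : Prop) [Decidable P] :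
    Nat.card {a : ZMod q // a = 0 ↔ P} = if P then 1 else q - 1 := by
  split_ifs with hP
  · simp [hP]
  · simp [hP, Nat.card_eq_fintype_card, Fintype.card_subtype_compl, ZMod.card]

lemma IsCoprime.ne_zero_or_ne_zero_of_map {R S : Type*} [CommRing R] [CommRing S] [Nontrivial S]
    {x y : R} (h : IsCoprime x y) (f : R →+* S) : f x ≠ 0 ∨ f y ≠ 0 := by
  by_contra! hxy
  simpa [hxy.1, hxy.2, isCoprime_zero_left] using h.map f

section ZeroSet

variable {m : ℕ} {p : Fin m → ℕ}

lemma mem_Z_iff {x : ZMod (NN m p)} {i : Fin m} :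
    i ∈ Z m p x ↔ ZMod.castHom (dvd_prod_of_mem p (mem_univ i)) (ZMod (p i)) x = 0 := by
  simp only [Z, Finset.mem_filter, Finset.mem_univ, true_and]

lemma disjoint_Z_of_adj (hp : ∀ i, p i ≠ 1) {x y : Vtx m p} (h : (G2 m p).Adj x y) :
    Disjoint (Z m p x.1) (Z m p y.1) := by
  have hcop : IsCoprime x.1 y.1 :=
    (Ideal.sup_eq_top_iff_isCoprime _ _).1 (by rw [← Ideal.span_insert]; exact h.2)
  refine Finset.disjoint_left.2 fun i hx hy => ?_
  have : Nontrivial (ZMod (p i)) := ZMod.nontrivial_iff.2 (hp i)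
  rw [mem_Z_iff] at hx hy
  exact (hcop.ne_zero_or_ne_zero_of_map _).elim (· hx) (· hy)

noncomputable def crtEquiv (hp : ∀ i, (p i).Prime) (hinj : Function.Injective p) :
    ZMod (NN m p) ≃+* Π i, ZMod (p i) :=
  ZMod.prodEquivPi p fun i j hij => (Nat.coprime_primes (hp i) (hp j)).2 (hinj.ne hij)

lemma mem_Z_iff_crtEquiv (hp : ∀ i, (p i).Prime) (hinj : Function.Injective p)
    {x : ZMod (NN m p)} {i : Fin m} : i ∈ Z m p x ↔ crtEquiv hp hinj x i = 0 := by
  have : (Pi.evalRingHom _ i).comp (crtEquiv hp hinj : ZMod (NN m p) →+* Π i, ZMod (p i)) =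
      ZMod.castHom (dvd_prod_of_mem p (mem_univ i)) (ZMod (p i)) :=
    RingHom.ext_zmod _ _
  rw [mem_Z_iff, ← this]
  rfl

lemma Z_eq_univ_iff (hp : ∀ i, (p i).Prime) (hinj : Function.Injective p)
    {x : ZMod (NN m p)} : Z m p x = univ ↔ x = 0 := by
  simp only [Finset.eq_univ_iff_forall, mem_Z_iff_crtEquiv hp hinj, ← funext_iff, ← Pi.zero_def]
  exact (crtEquiv hp hinj).map_eq_zero_iff

lemma Z_eq_empty_iff (hp : ∀ i, (p i).Prime) (hinj : Function.Injective p)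
    {x : ZMod (NN m p)} : Z m p x = ∅ ↔ IsUnit x := by
  have (i : Fin m) : Fact (p i).Prime := ⟨hp i⟩
  simp only [Finset.eq_empty_iff_forall_notMem, mem_Z_iff_crtEquiv hp hinj, ← isUnit_iff_ne_zero,
    ← Pi.isUnit_iff, MulEquiv.isUnit_map]

lemma ne_zero_and_not_isUnit_iff (hp : ∀ i, (p i).Prime) (hinj : Function.Injective p)
    {x : ZMod (NN m p)} : (x ≠ 0 ∧ ¬ IsUnit x) ↔ (Z m p x ≠ univ ∧ Z m p x ≠ ∅) := by
  rw [Ne, Ne, Ne, Z_eq_univ_iff hp hinj, Z_eq_empty_iff hp hinj]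

lemma exists_Z_eq (hp : ∀ i, (p i).Prime) (hinj : Function.Injective p) (S : Finset (Fin m)) :
    ∃ x, Z m p x = S := by
  refine ⟨(crtEquiv hp hinj).symm fun i => if i ∈ S then 0 else 1, Finset.ext fun i => ?_⟩
  have : Fact (p i).Prime := ⟨hp i⟩
  simp [mem_Z_iff_crtEquiv hp hinj]

lemma card_Z_eq (hp : ∀ i, (p i).Prime) (hinj : Function.Injective p) (S : Finset (Fin m)) :
    Nat.card {x // Z m p x = S} = ∏ i ∈ Sᶜ, (p i - 1) := by
  have (i : Fin m) : NeZero (p i) := ⟨(hp i).ne_zero⟩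
  calc Nat.card {x // Z m p x = S}
      = Nat.card {v : Π i, ZMod (p i) // ∀ i, v i = 0 ↔ i ∈ S} :=
        Nat.card_congr <| (crtEquiv hp hinj).toEquiv.subtypeEquiv fun x => by
          simp [Finset.ext_iff, mem_Z_iff_crtEquiv hp hinj]
    _ = ∏ i, Nat.card {a : ZMod (p i) // a = 0 ↔ i ∈ S} :=
        (Nat.card_congr (Equiv.subtypePiEquivPi (p := fun i a => a = 0 ↔ i ∈ S))).trans Nat.card_pi
    _ = ∏ i ∈ Sᶜ, (p i - 1) := by
        simp only [ZMod.card_subtype_eq_zero_iff, ← ite_not (p := _ ∈ S), ← Finset.mem_compl,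
          Finset.prod_ite_mem, univ_inter]

end ZeroSet

section Classes

variable {m : ℕ} {p : Fin m → ℕ}

lemma XS_nonempty (hp : ∀ i, (p i).Prime) (hinj : Function.Injective p) {S : Finset (Fin m)}
    (h₀ : S ≠ ∅) (h₁ : S ≠ univ) : (XS m p S).Nonempty := by
  obtain ⟨x, hx⟩ := exists_Z_eq hp hinj S
  exact ⟨⟨x, (ne_zero_and_not_isUnit_iff hp hinj).2 (hx ▸ ⟨h₁, h₀⟩)⟩, hx⟩

lemma ncard_XS (hp : ∀ i, (p i).Prime) (hinj : Function.Injective p) {S : Finset (Fin m)}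
    (h₀ : S ≠ ∅) (h₁ : S ≠ univ) : (XS m p S).ncard = ∏ i ∈ Sᶜ, (p i - 1) := by
  rw [← card_Z_eq hp hinj S, ← Nat.card_coe_set_eq]
  exact Nat.card_congr <| Equiv.subtypeSubtypeEquivSubtype (q := fun x => Z m p x = S)
    fun hx => (ne_zero_and_not_isUnit_iff hp hinj).2 (hx ▸ ⟨h₁, h₀⟩)

lemma mem_XS_of_adj (hp : ∀ i, (p i).Prime) (hinj : Function.Injective p) {x y : Vtx m p}
    (h : (G2 m p).Adj x y) {i : Fin m} (hx : Z m p x.1 = {i}ᶜ) : y ∈ XS m p {i} := by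
  have hsub : Z m p y.1 ⊆ {i} := by
    simpa only [hx, disjoint_compl_left_iff] using disjoint_Z_of_adj (fun j => (hp j).ne_one) h
  exact (subset_singleton_iff.1 hsub).resolve_left ((ne_zero_and_not_isUnit_iff hp hinj).1 y.2).2

lemma not_connected_induce_compl_XS_singleton (hp : ∀ i, (p i).Prime)
    (hinj : Function.Injective p) (hm : 3 ≤ m) (i : Fin m) :
    ¬ ((G2 m p).induce (XS m p {i})ᶜ).Connected := by
  obtain ⟨j, hj, k, hk, hjk⟩ := (one_lt_card (s := univ.erase i)).1 <| by
    rw [card_erase_of_mem (mem_univ i), card_univ, Fintype.card_fin]; omega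
  rw [mem_erase] at hj hk
  obtain ⟨x, hx⟩ := XS_nonempty hp hinj (S := {i}ᶜ)
    (ne_empty_of_mem (a := j) (by simpa using hj.1)) (by simp [Finset.ext_iff])
  obtain ⟨y, hy⟩ := XS_nonempty hp hinj (S := {j}) (singleton_ne_empty j)
    fun h => hj.1 (mem_singleton.1 (h.symm ▸ mem_univ i)).symm
  refine SimpleGraph.not_connected_induce_of_forall_adj_notMem (x := x) (y := y) ?_ ?_ ?_
    fun z hz => not_not.2 (mem_XS_of_adj hp hinj hz hx)
  · exact fun h => by simpa using congrArg (i ∈ ·) (hx.symm.trans h)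
  · exact fun h => hj.1 (singleton_inj.1 (hy.symm.trans h))
  · rintro rfl
    simpa [hk.1, hjk.symm] using congrArg (k ∈ ·) (hx.symm.trans hy)

end Classes

theorem stmt9 (m : ℕ) (hm : 3 ≤ m) (p : Fin m → ℕ) (hp : ∀ i, (p i).Prime)
    (hmono : StrictMono p) :
    ¬ ((G2 m p).induce (XS m p {(⟨m - 1, by omega⟩ : Fin m)})ᶜ).Connected ∧
    kappa (G2 m p) ≤ (XS m p {(⟨m - 1, by omega⟩ : Fin m)}).ncard ∧
    (XS m p {(⟨m - 1, by omega⟩ : Fin m)}).ncard = ∏ i ∈ Finset.univ.erase (⟨m - 1, by omega⟩ : Fin m), (p i - 1) := by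
  have hdisc := not_connected_induce_compl_XS_singleton hp hmono.injective hm ⟨m - 1, by omega⟩
  refine ⟨hdisc, Nat.sInf_le ⟨_, rfl, hdisc⟩, ?_⟩
  rw [ncard_XS hp hmono.injective (singleton_ne_empty _) fun h => ?_, compl_singleton]
  have := mem_singleton.1 (h.symm ▸ mem_univ (⟨0, by omega⟩ : Fin m))
  simp only [Fin.mk.injEq] at this
  omega
end
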